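/- The existential loop condition does not imply the universal one: for the relation R : ℤ → ℤ → Prop given by R x y := x ≥ 0 (with e x := ∃ y, R x y), the condition ∀ x, e x → ∃ y, R x y ∧ e y holds, but the condition ∀ x, e x → ∀ y, R x y → e y fails. -/
import Mathlib

theorem stmt_3 :
    (∀ x : ℤ, (∃ _y : ℤ, x ≥ 0) → ∃ y : ℤ, x ≥ 0 ∧ (∃ _y' : ℤ, y ≥ 0)) ∧
    ¬ (∀ x : ℤ, (∃ _y : ℤ, x ≥ 0) → ∀ y : ℤ, x ≥ 0 → (∃ _y' : ℤ, y ≥ 0)) := by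
  constructor
  · intro x ⟨_, hx⟩
    exact ⟨0, hx, 0, le_refl 0⟩
  · intro h
    obtain ⟨_, hbad⟩ := h 0 ⟨0, le_refl 0⟩ (-1) (le_refl 0)
    omega
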